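/- arXiv:2504.02649 — 4 statements merged into one kernel-verified Lean document; each statement's English description precedes it below -/
import Mathlib

section
/- Let (A_k)_{k≥1} be a summable family of d×d real matrices with nonnegative entries satisfying ρ(Σ_{k=1}^∞ A_k) < 1, and write S = Σ_{k=1}^∞ A_k. Let (x_t)_{t∈ℤ} be a bounded sequence in ℝ^d and K̄ ∈ ℝ^d a vector with nonnegative components such that for all t ∈ ℤ, |x_t| ≼ Σ_{k=1}^∞ A_k |x_{t−k}| + K̄. Then I − S is invertible and for every t ∈ ℤ, |x_t| ≼ (I − S)^{−1} K̄. -/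
/-- The spectral radius of a real matrix, via its complexification. -/
noncomputable def specRad {d : ℕ} (A : Matrix (Fin d) (Fin d) ℝ) : ENNReal :=
  spectralRadius ℂ (A.map Complex.ofReal)

/-!
By Gelfand's formula, `ρ(S) < 1` makes the Neumann series `∑ Sⁿ` converge, so `I - S` is
invertible with inverse `∑ Sⁿ`, which is entrywise nonnegative. The componentwise supremum `b`
of the bounded sequence `|x_t|` satisfies `b ≼ S b + K̄`, i.e. `(I - S) b ≼ K̄`, and applying the
nonnegative matrix `(I - S)⁻¹` to this inequality gives `|x_t| ≼ b ≼ (I - S)⁻¹ K̄`.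
-/

open Filter Matrix
open scoped NNReal ENNReal

theorem summable_pow_of_spectralRadius_lt_one {A : Type*} [NormedRing A] [NormedAlgebra ℂ A]
    [CompleteSpace A] {a : A} (h : spectralRadius ℂ a < 1) : Summable (a ^ ·) := by
  obtain ⟨r, hρr, hr1⟩ := ENNReal.lt_iff_exists_nnreal_btwn.1 h
  have hroot : ∀ᶠ n : ℕ in atTop, (‖a ^ n‖₊ : ℝ≥0∞) ^ (1 / n : ℝ) < r :=
    (spectrum.pow_nnnorm_pow_one_div_tendsto_nhds_spectralRadius a).eventually_lt_const hρr
  refine .of_norm_bounded_eventually_nat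
    (NNReal.summable_coe.2 (NNReal.summable_geometric (r := r) (by exact_mod_cast hr1))) ?_
  filter_upwards [hroot, eventually_gt_atTop 0] with n hn hn0
  rw [← ENNReal.coe_rpow_of_nonneg _ (by positivity), ENNReal.coe_lt_coe, one_div,
    NNReal.rpow_inv_lt_iff (by exact_mod_cast hn0), NNReal.rpow_natCast] at hn
  exact_mod_cast hn.le

theorem Summable.isUnit_one_sub {α : Type*} [Ring α] [TopologicalSpace α] [IsTopologicalRing α]
    [T2Space α] {x : α} (h : Summable (x ^ ·)) : IsUnit (1 - x) :=
  ⟨⟨1 - x, ∑' k : ℕ, x ^ k, h.one_sub_mul_tsum_pow, h.tsum_pow_mul_one_sub⟩, rfl⟩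

theorem HasSum.matrix_mulVec {ι m n α : Type*} [Fintype n] [NonUnitalNonAssocSemiring α]
    [TopologicalSpace α] [IsTopologicalSemiring α] {A : ι → Matrix m n α} {a : Matrix m n α}
    (h : HasSum A a) (v : n → α) : HasSum (fun k => A k *ᵥ v) (a *ᵥ v) :=
  h.map (mulVec.addMonoidHomLeft v) (continuous_id.matrix_mulVec continuous_const)

namespace Matrix

theorem summable_pow_of_spectralRadius_map_ofReal_lt_one {n : Type*} [Fintype n] [DecidableEq n]
    {S : Matrix n n ℝ} (h : spectralRadius ℂ (S.map Complex.ofReal) < 1) : Summable (S ^ ·) := by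
  -- The spectrum does not see the norm; any Banach-algebra norm on complex matrices will do.
  let := Matrix.linftyOpNormedRing (n := n) (α := ℂ)
  let := Matrix.linftyOpNormedAlgebra (n := n) (α := ℂ) (R := ℂ)
  have hsum := (summable_pow_of_spectralRadius_lt_one h).map
    (Complex.reAddGroupHom.mapMatrix (m := n) (n := n))
    (continuous_id.matrix_map Complex.continuous_re)
  convert hsum using 2 with k
  have hpow : S.map Complex.ofReal ^ k = (S ^ k).map Complex.ofReal :=
    (map_pow Complex.ofRealHom.mapMatrix S k).symm
  ext i j
  simp [hpow]

section Order
variable {m n α : Type*} [Fintype n] [Semiring α] [PartialOrder α] [IsOrderedRing α]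

theorem mulVec_le_mulVec_of_nonneg {M : Matrix m n α} (hM : ∀ i j, 0 ≤ M i j) {u v : n → α}
    (huv : u ≤ v) : M *ᵥ u ≤ M *ᵥ v :=
  fun i => Finset.sum_le_sum fun j _ => mul_le_mul_of_nonneg_left (huv j) (hM i j)

theorem mulVec_nonneg {M : Matrix m n α} (hM : ∀ i j, 0 ≤ M i j) {v : n → α} (hv : 0 ≤ v) :
    0 ≤ M *ᵥ v := by
  simpa using mulVec_le_mulVec_of_nonneg hM hv

end Order

theorem tsum_apply_nonneg {ι m n α : Type*} [AddCommMonoid α] [PartialOrder α]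
    [IsOrderedAddMonoid α] [TopologicalSpace α] [OrderClosedTopology α] {A : ι → Matrix m n α}
    (hA : Summable A) (hA0 : ∀ k i j, 0 ≤ A k i j) (i : m) (j : n) : 0 ≤ (∑' k, A k) i j :=
  (Pi.hasSum.1 (Pi.hasSum.1 hA.hasSum i) j).nonneg fun k => hA0 k i j

theorem tsum_mulVec_apply_le {ι m n : Type*} [Fintype n] {A : ι → Matrix m n ℝ}
    (hA : Summable A) (hA0 : ∀ k i j, 0 ≤ A k i j) {y : ι → n → ℝ} {b : n → ℝ}
    (hy0 : ∀ k, 0 ≤ y k) (hyb : ∀ k, y k ≤ b) (i : m) :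
    ∑' k, (A k *ᵥ y k) i ≤ ((∑' k, A k) *ᵥ b) i := by
  have hle k : (A k *ᵥ y k) i ≤ (A k *ᵥ b) i := mulVec_le_mulVec_of_nonneg (hA0 k) (hyb k) i
  have hb := Pi.hasSum.1 (hA.hasSum.matrix_mulVec b) i
  refine hasSum_le hle (Summable.hasSum ?_) hb
  exact .of_nonneg_of_le (fun k => mulVec_nonneg (hA0 k) (hy0 k) i) hle hb.summable

theorem le_inv_one_sub_mulVec {n α : Type*} [Fintype n] [DecidableEq n] [CommRing α]
    [PartialOrder α] [IsOrderedRing α] [TopologicalSpace α] [IsTopologicalRing α]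
    [OrderClosedTopology α] {S : Matrix n n α} (hS : ∀ i j, 0 ≤ S i j)
    (hpow : Summable (S ^ ·)) {b K : n → α} (hb : b ≤ S *ᵥ b + K) : b ≤ (1 - S)⁻¹ *ᵥ K := by
  have hinv : (1 - S)⁻¹ = ∑' k : ℕ, S ^ k := inv_eq_left_inv hpow.tsum_pow_mul_one_sub
  calc b = (1 - S)⁻¹ *ᵥ ((1 - S) *ᵥ b) := by
        rw [mulVec_mulVec, hinv, hpow.tsum_pow_mul_one_sub, one_mulVec]
    _ ≤ (1 - S)⁻¹ *ᵥ K := by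
        refine mulVec_le_mulVec_of_nonneg (hinv ▸ tsum_apply_nonneg hpow (pow_apply_nonneg hS)) ?_
        rwa [sub_mulVec, one_mulVec, sub_le_iff_le_add']

end Matrix

theorem stmt2_general {d : ℕ} (A : ℕ → Matrix (Fin d) (Fin d) ℝ)
    (hAnn : ∀ k i j, 0 ≤ A k i j)
    (hAsum : Summable A)
    (S : Matrix (Fin d) (Fin d) ℝ) (hS : S = ∑' k, A k)
    (hρ : specRad S < 1)
    (x : ℤ → Fin d → ℝ) (hxbdd : ∃ M : ℝ, ∀ t i, |x t i| ≤ M)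
    (K : Fin d → ℝ)
    (hrec : ∀ t : ℤ, ∀ i,
      |x t i| ≤ (∑' k : ℕ, (A k).mulVec (fun j => |x (t - (k : ℤ)) j|) i) + K i) :
    IsUnit (1 - S) ∧ ∀ t : ℤ, ∀ i, |x t i| ≤ (1 - S)⁻¹.mulVec K i := by
  have hpow : Summable (S ^ ·) := summable_pow_of_spectralRadius_map_ofReal_lt_one hρ
  refine ⟨hpow.isUnit_one_sub, fun t i => ?_⟩
  subst hS
  obtain ⟨M, hM⟩ := hxbdd
  let b : Fin d → ℝ := fun j => ⨆ s, |x s j|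
  have hxb (s : ℤ) : (fun j => |x s j|) ≤ b := fun j =>
    le_ciSup ⟨M, Set.forall_mem_range.2 (hM · j)⟩ s
  have hb : b ≤ (∑' k, A k) *ᵥ b + K := fun j => ciSup_le fun s => (hrec s j).trans <|
    add_le_add_left (tsum_mulVec_apply_le hAsum hAnn (fun _ _ => abs_nonneg _) (fun _ => hxb _) j) _
  exact (hxb t i).trans (le_inv_one_sub_mulVec (tsum_apply_nonneg hAsum hAnn) hpow hb i)

/-- If `(A_k)_{k≥1}` are summable nonnegative matrices with `S = Σ A_k`, `ρ(S) < 1`,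
`(x_t)_{t∈ℤ}` is bounded, `K̄` is a nonnegative vector and
`|x_t| ≼ Σ_{k≥1} A_k |x_{t-k}| + K̄` for all `t`, then `I - S` is invertible and
`|x_t| ≼ (I - S)⁻¹ K̄`.  The family `(A_k)_{k≥1}` is encoded with `A 0 = 0`. -/
theorem stmt2 {d : ℕ} (A : ℕ → Matrix (Fin d) (Fin d) ℝ)
    (hA0 : A 0 = 0) (hAnn : ∀ k i j, 0 ≤ A k i j)
    (hAsum : Summable A)
    (S : Matrix (Fin d) (Fin d) ℝ) (hS : S = ∑' k, A k)
    (hρ : specRad S < 1)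
    (x : ℤ → Fin d → ℝ) (hxbdd : ∃ M : ℝ, ∀ t i, |x t i| ≤ M)
    (K : Fin d → ℝ) (hK : ∀ i, 0 ≤ K i)
    (hrec : ∀ t : ℤ, ∀ i,
      |x t i| ≤ (∑' k : ℕ, (A k).mulVec (fun j => |x (t - (k : ℤ)) j|) i) + K i) :
    IsUnit (1 - S) ∧ ∀ t : ℤ, ∀ i, |x t i| ≤ (1 - S)⁻¹.mulVec K i :=
  stmt2_general A hAnn hAsum S hS hρ x hxbdd K hrec
end

section
/- Fix τ > 0 and let (φ_k)_{k∈ℕ} be a square-summable real sequence (φ ∈ ℓ²(ℕ)). For every ε > 0 there exist a positive integer r and real numbers ν_1, …, ν_r such that (Σ_{k=0}^∞ (φ_k − Σ_{m=1}^r ν_m e^{−2km/τ})²)^{1/2} ≤ ε. In other words, the linear span of the geometric sequences (e^{−2mk/τ})_{k∈ℕ}, m = 1, 2, 3, …, is dense in ℓ²(ℕ). -/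
/-!
Let `W` be the closed span of the geometric sequences `gₘ = (bₘᵏ)ₖ` in `ℓᵖ`, `p < ∞`, where
`bₘ ≠ 0` and `bₘ → 0`. With `R` the right shift, an isometry, every geometric sequence satisfies
`g = e₀ + b • R g`; hence `‖g - e₀‖ = ‖b‖ ‖g‖ ≤ ‖b‖ / (1 - ‖b‖)`, and letting `bₘ → 0` gives
`e₀ ∈ W`. The same identity gives `R gₘ = bₘ⁻¹ • (gₘ - e₀) ∈ W`, so by continuity `R` maps `W`
into itself, `W` contains every `eⱼ = Rʲ e₀`, and so `W` is everything. The theorem is the case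
`p = 2`, `bₘ = e^{-2(m+1)/τ}`.
-/

open Filter Topology
open scoped ENNReal

namespace lp

variable {𝕜 : Type*} [NormedField 𝕜] {E : Type*} [NormedAddCommGroup E] [NormedSpace 𝕜 E]
  {p : ℝ≥0∞}

def shiftSeq (f : ℕ → E) : ℕ → E
  | 0 => 0
  | k + 1 => f k

@[simp] theorem shiftSeq_zero (f : ℕ → E) : shiftSeq f 0 = 0 := rfl
@[simp] theorem shiftSeq_succ (f : ℕ → E) (k : ℕ) : shiftSeq f (k + 1) = f k := rfl

theorem memℓp_shiftSeq [Fact (1 ≤ p)] {f : ℕ → E} (hf : Memℓp f p) : Memℓp (shiftSeq f) p := by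
  rcases eq_or_ne p ∞ with rfl | hp
  · obtain ⟨C, hC⟩ := hf.bddAbove
    refine memℓp_infty ⟨max C 0, ?_⟩
    rintro _ ⟨_ | k, rfl⟩
    · simp
    · exact (hC ⟨k, rfl⟩).trans (le_max_left _ _)
  · have hp' : 0 < p.toReal := ENNReal.toReal_pos (zero_lt_one.trans_le Fact.out).ne' hp
    refine memℓp_gen ((summable_nat_add_iff 1).mp ?_)
    simpa using hf.summable hp'

variable (𝕜 p) in
def shiftRight [Fact (1 ≤ p)] : lp (fun _ : ℕ => E) p →ₗ[𝕜] lp (fun _ : ℕ => E) p where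
  toFun x := ⟨shiftSeq x, memℓp_shiftSeq (lp.memℓp x)⟩
  map_add' x y := by ext (_ | k); exacts [(add_zero _).symm, rfl]
  map_smul' c x := by ext (_ | k); exacts [(smul_zero _).symm, rfl]

variable [Fact (1 ≤ p)]

@[simp] theorem shiftRight_apply_zero (x : lp (fun _ : ℕ => E) p) : shiftRight 𝕜 p x 0 = 0 := rfl
@[simp] theorem shiftRight_apply_succ (x : lp (fun _ : ℕ => E) p) (k : ℕ) :
    shiftRight 𝕜 p x (k + 1) = x k := rfl

theorem norm_shiftRight (hp : p ≠ ∞) (x : lp (fun _ : ℕ => E) p) : ‖shiftRight 𝕜 p x‖ = ‖x‖ := by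
  have hp' : 0 < p.toReal := ENNReal.toReal_pos (zero_lt_one.trans_le Fact.out).ne' hp
  rw [← Real.rpow_left_inj (norm_nonneg _) (norm_nonneg _) hp'.ne', norm_rpow_eq_tsum hp',
    norm_rpow_eq_tsum hp', ((lp.memℓp (shiftRight 𝕜 p x)).summable hp').tsum_eq_zero_add]
  simp [Real.zero_rpow hp'.ne']

theorem continuous_shiftRight (hp : p ≠ ∞) : Continuous (shiftRight 𝕜 p (E := E)) :=
  (AddMonoidHomClass.isometry_of_norm _ (norm_shiftRight hp)).continuous

theorem shiftRight_single (i : ℕ) (a : E) :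
    shiftRight 𝕜 p (lp.single p i a) = lp.single p (i + 1) a := by
  ext (_ | k) <;> simp [lp.single_apply, Pi.single_apply]

def geom (b : 𝕜) (hb : ‖b‖ < 1) : lp (fun _ : ℕ => 𝕜) p :=
  ⟨fun k => b ^ k, Memℓp.of_exponent_ge (memℓp_gen (p := 1) <| by
    simpa [norm_pow] using summable_geometric_of_lt_one (norm_nonneg b) hb) Fact.out⟩

@[simp] theorem geom_apply (b : 𝕜) (hb : ‖b‖ < 1) (k : ℕ) : geom (p := p) b hb k = b ^ k := rfl

theorem geom_eq_single_add_smul_shiftRight (b : 𝕜) (hb : ‖b‖ < 1) :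
    geom (p := p) b hb = lp.single p 0 1 + b • shiftRight 𝕜 p (geom b hb) := by
  ext (_ | k) <;> simp only [lp.coeFn_add, lp.coeFn_smul, Pi.add_apply, Pi.smul_apply] <;>
    simp [lp.single_apply, pow_succ']

theorem norm_geom_sub_single_le (hp : p ≠ ∞) (b : 𝕜) (hb : ‖b‖ < 1) :
    ‖geom (p := p) b hb - lp.single p 0 1‖ ≤ ‖b‖ / (1 - ‖b‖) := by
  have hp₀ : p ≠ 0 := (zero_lt_one.trans_le Fact.out).ne'
  set g : lp (fun _ : ℕ => 𝕜) p := geom b hb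
  set e₀ : lp (fun _ : ℕ => 𝕜) p := lp.single p 0 1
  have hdiff : ‖g - e₀‖ = ‖b‖ * ‖g‖ := by
    have : g - e₀ = b • shiftRight 𝕜 p g := by
      rw [sub_eq_iff_eq_add']
      exact geom_eq_single_add_smul_shiftRight b hb
    rw [this, norm_const_smul hp₀, norm_shiftRight hp]
  have hg : ‖g‖ ≤ 1 + ‖b‖ * ‖g‖ := by
    calc ‖g‖ ≤ ‖e₀‖ + ‖g - e₀‖ := norm_le_insert' g e₀
      _ = 1 + ‖b‖ * ‖g‖ := by rw [hdiff, lp.norm_single (pos_iff_ne_zero.2 hp₀), norm_one]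
  rw [hdiff, le_div_iff₀ (sub_pos.2 hb)]
  nlinarith [norm_nonneg b]

theorem tendsto_geom_single {ι : Type*} {l : Filter ι} (hp : p ≠ ∞) {b : ι → 𝕜}
    (hb : ∀ i, ‖b i‖ < 1) (hlim : Tendsto b l (𝓝 0)) :
    Tendsto (fun i => geom (p := p) (b i) (hb i)) l (𝓝 (lp.single p 0 1)) := by
  have hnorm : Tendsto (fun i => ‖b i‖) l (𝓝 0) := tendsto_norm_zero.comp hlim
  have hbound : Tendsto (fun i => ‖b i‖ / (1 - ‖b i‖)) l (𝓝 0) := by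
    have := hnorm.div (tendsto_const_nhds.sub hnorm) (by norm_num : (1 : ℝ) - 0 ≠ 0)
    rwa [sub_zero, div_one] at this
  rw [tendsto_iff_norm_sub_tendsto_zero]
  exact squeeze_zero (fun _ => norm_nonneg _) (fun i => norm_geom_sub_single_le hp _ _) hbound

theorem topologicalClosure_span_geom_eq_top (hp : p ≠ ∞) {b : ℕ → 𝕜} (hb : ∀ m, ‖b m‖ < 1)
    (hb₀ : ∀ m, b m ≠ 0) (hlim : Tendsto b atTop (𝓝 0)) :
    (Submodule.span 𝕜 (Set.range fun m => geom (p := p) (b m) (hb m))).topologicalClosure = ⊤ := by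
  set W := (Submodule.span 𝕜 (Set.range fun m => geom (p := p) (b m) (hb m))).topologicalClosure
  have hW : IsClosed (W : Set (lp (fun _ : ℕ => 𝕜) p)) := Submodule.isClosed_topologicalClosure _
  have hgeom (m : ℕ) : geom (b m) (hb m) ∈ W :=
    Submodule.le_topologicalClosure _ (Submodule.subset_span ⟨m, rfl⟩)
  have he₀ : lp.single p 0 1 ∈ W :=
    hW.mem_of_tendsto (tendsto_geom_single hp hb hlim) (Eventually.of_forall hgeom)
  have hshift : W ≤ W.comap (shiftRight 𝕜 p) := by
    refine Submodule.topologicalClosure_minimal _ ?_ (hW.preimage (continuous_shiftRight hp))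
    rw [Submodule.span_le]
    rintro _ ⟨m, rfl⟩
    have hR : shiftRight 𝕜 p (geom (b m) (hb m)) =
        (b m)⁻¹ • (geom (b m) (hb m) - lp.single p 0 1) := by
      conv_rhs => rw [geom_eq_single_add_smul_shiftRight]
      rw [add_sub_cancel_left, inv_smul_smul₀ (hb₀ m)]
    simpa [hR] using W.smul_mem (b m)⁻¹ (W.sub_mem (hgeom m) he₀)
  have hsingle (i : ℕ) : lp.single p i 1 ∈ W := by
    induction i with
    | zero => exact he₀
    | succ i ih => simpa [shiftRight_single] using hshift ih
  refine eq_top_iff.2 fun f _ => hW.mem_of_tendsto (lp.hasSum_single hp f)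
    (Eventually.of_forall fun s => W.sum_mem fun i _ => ?_)
  simpa [← lp.single_smul] using W.smul_mem (f i) (hsingle i)

theorem exists_norm_sub_sum_geom_lt (hp : p ≠ ∞) {b : ℕ → 𝕜} (hb : ∀ m, ‖b m‖ < 1)
    (hb₀ : ∀ m, b m ≠ 0) (hlim : Tendsto b atTop (𝓝 0)) (f : lp (fun _ : ℕ => 𝕜) p) {ε : ℝ}
    (hε : 0 < ε) :
    ∃ r, 0 < r ∧ ∃ ν : Fin r → 𝕜, ‖f - ∑ m : Fin r, ν m • geom (b m) (hb m)‖ < ε := by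
  have hf : f ∈ closure (Submodule.span 𝕜 (Set.range fun m => geom (p := p) (b m) (hb m)) :
      Set (lp (fun _ : ℕ => 𝕜) p)) := by
    rw [← Submodule.topologicalClosure_coe, topologicalClosure_span_geom_eq_top hp hb hb₀ hlim]
    trivial
  obtain ⟨y, hy, hfy⟩ := Metric.mem_closure_iff.1 hf ε hε
  obtain ⟨c, rfl⟩ := Finsupp.mem_span_range_iff_exists_finsupp.1 hy
  refine ⟨c.support.sup id + 1, Nat.succ_pos _, fun m => c m, ?_⟩
  have hsupp : c.support ⊆ Finset.range (c.support.sup id + 1) := fun m hm =>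
    Finset.mem_range.2 (Nat.lt_succ_of_le (Finset.le_sup (f := id) hm))
  rwa [Fin.sum_univ_eq_sum_range (fun m => c m • geom (b m) (hb m)), ← dist_eq_norm,
    ← c.sum_of_support_subset hsupp (fun m a => a • geom (b m) (hb m)) fun _ _ => zero_smul _ _]

theorem norm_eq_sqrt_tsum_sq {ι : Type*} (f : lp (fun _ : ι => ℝ) 2) :
    ‖f‖ = √(∑' i, f i ^ 2) := by
  rw [norm_eq_tsum_rpow (by simp), Real.sqrt_eq_rpow]
  simp

end lp

/-- ℓ²-density of exponential polynomials: for any square-summable real sequence `φ`,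
any `τ > 0` and any `ε > 0`, there are `r ≥ 1` and coefficients `ν_1, …, ν_r` with
`(Σ_k (φ_k − Σ_{m=1}^r ν_m e^{−2km/τ})²)^{1/2} ≤ ε`. -/
theorem stmt4 (τ : ℝ) (hτ : 0 < τ) (φ : ℕ → ℝ) (hφ : Summable (fun k => φ k ^ 2))
    (ε : ℝ) (hε : 0 < ε) :
    ∃ r : ℕ, 0 < r ∧ ∃ ν : Fin r → ℝ,
      Real.sqrt (∑' k : ℕ,
        (φ k - ∑ m : Fin r, ν m * Real.exp (-(2 * (k : ℝ) * ((m : ℕ) + 1)) / τ)) ^ 2) ≤ ε := by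
  set a := Real.exp (-2 / τ)
  have ha₀ : 0 < a := Real.exp_pos _
  have ha₁ : a < 1 := Real.exp_lt_one_iff.2 (div_neg_of_neg_of_pos (by norm_num) hτ)
  set b : ℕ → ℝ := fun m => a ^ (m + 1)
  have hb (m : ℕ) : ‖b m‖ < 1 := by
    rw [Real.norm_of_nonneg (by positivity)]
    exact pow_lt_one₀ ha₀.le ha₁ m.succ_ne_zero
  have hlim : Tendsto b atTop (𝓝 0) :=
    (tendsto_pow_atTop_nhds_zero_of_lt_one ha₀.le ha₁).comp (tendsto_add_atTop_nat 1)
  let f : lp (fun _ : ℕ => ℝ) 2 := ⟨φ, memℓp_gen (by simpa using hφ)⟩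
  obtain ⟨r, hr, ν, hν⟩ := lp.exists_norm_sub_sum_geom_lt (by simp) hb
    (fun m => (pow_pos ha₀ _).ne') hlim f hε
  refine ⟨r, hr, ν, ?_⟩
  have hexp (k m : ℕ) : Real.exp (-(2 * (k : ℝ) * (m + 1)) / τ) = b m ^ k := by
    rw [← pow_mul, ← Real.exp_nat_mul]
    congr 1
    push_cast
    ring
  have hcoord (k : ℕ) :
      (f - ∑ m, ν m • lp.geom (b m) (hb m) : lp (fun _ : ℕ => ℝ) 2) k =
        φ k - ∑ m, ν m * b m ^ k := by
    simp only [lp.coeFn_sub, lp.coeFn_sum, lp.coeFn_smul, Pi.sub_apply, Finset.sum_apply,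
      Pi.smul_apply, smul_eq_mul, lp.geom_apply]
    rfl
  rw [lp.norm_eq_sqrt_tsum_sq] at hν
  simpa [hexp, hcoord] using hν.le
end

section
/- Fix τ > 0 and let (φ_k)_{k∈ℕ} be a square-summable real sequence. If Σ_{k=0}^∞ φ_k e^{−2nk/τ} = 0 for every positive integer n, then φ_k = 0 for all k ∈ ℕ. -/
/-!
With `r = e^{-2/τ} ∈ (0, 1)` the hypothesis says that the power series `∑ φ_k z^k` vanishes at
every `z = r^n`. Its coefficients are bounded, so it converges on the unit disc, and its zeros
`r^n` accumulate at `0`; by the isolated zeros principle it is the zero series.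
-/

open Filter Topology FormalMultilinearSeries

section PowerSeries

variable {𝕜 : Type*} [NontriviallyNormedField 𝕜]

theorem FormalMultilinearSeries.one_le_ofScalars_radius_of_norm_le {c : ℕ → 𝕜} {C : ℝ}
    (hc : ∀ n, ‖c n‖ ≤ C) : 1 ≤ (ofScalars 𝕜 c).radius := by
  simpa using (ofScalars 𝕜 c).le_radius_of_bound C (r := 1) fun n => by simpa using hc n

theorem FormalMultilinearSeries.eq_zero_of_frequently_ofScalarsSum_eq_zero [CompleteSpace 𝕜]
    {c : ℕ → 𝕜} (hc : 0 < (ofScalars 𝕜 c).radius)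
    (h : ∃ᶠ z in 𝓝[≠] (0 : 𝕜), ofScalarsSum c z = 0) : c = 0 := by
  have hp : HasFPowerSeriesAt (ofScalarsSum c) (ofScalars 𝕜 c) 0 :=
    ((ofScalars 𝕜 c).hasFPowerSeriesOnBall hc).hasFPowerSeriesAt
  exact (ofScalars_series_eq_zero 𝕜).1
    (hp.eq_zero_of_eventually (hp.analyticAt.frequently_zero_iff_eventually_zero.1 h))

end PowerSeries

theorem abs_le_sqrt_tsum_sq {φ : ℕ → ℝ} (hφ : Summable fun k => φ k ^ 2) (k : ℕ) :
    |φ k| ≤ √(∑' j, φ j ^ 2) :=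
  Real.abs_le_sqrt (hφ.le_tsum k fun j _ => sq_nonneg (φ j))

/-- If a square-summable real sequence `φ` satisfies `Σ_k φ_k e^{−2nk/τ} = 0` for every
positive integer `n` (and some fixed `τ > 0`), then `φ = 0`. -/
theorem stmt5 (τ : ℝ) (hτ : 0 < τ) (φ : ℕ → ℝ) (hφ : Summable (fun k => φ k ^ 2))
    (h : ∀ n : ℕ, 0 < n → ∑' k : ℕ, φ k * Real.exp (-(2 * (n : ℝ) * (k : ℝ)) / τ) = 0) :
    ∀ k, φ k = 0 := by
  set r := Real.exp (-2 / τ)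
  have hr0 : 0 < r := Real.exp_pos _
  have hr1 : r < 1 := Real.exp_lt_one_iff.2 (div_neg_of_neg_of_pos (by norm_num) hτ)
  have hradius : 0 < (ofScalars ℝ φ).radius :=
    zero_lt_one.trans_le (one_le_ofScalars_radius_of_norm_le (abs_le_sqrt_tsum_sq hφ))
  have hzero : ∀ n : ℕ, 0 < n → ofScalarsSum φ (r ^ n) = 0 := by
    intro n hn
    rw [ofScalars_sum_eq, ← h n hn]
    refine tsum_congr fun k => ?_
    rw [smul_eq_mul, ← pow_mul, ← Real.exp_nat_mul]
    congr 2
    push_cast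
    ring
  have hr_pow : Tendsto (r ^ ·) atTop (𝓝[≠] (0 : ℝ)) :=
    tendsto_nhdsWithin_iff.2 ⟨tendsto_pow_atTop_nhds_zero_of_lt_one hr0.le hr1,
      Eventually.of_forall fun n => pow_ne_zero n hr0.ne'⟩
  exact congrFun (eq_zero_of_frequently_ofScalarsSum_eq_zero hradius
    (hr_pow.frequently ((eventually_gt_atTop 0).mono hzero).frequently))
end

section
/- Fix τ > 0 and let (φ_k)_{k∈ℕ} be an absolutely summable real sequence (φ ∈ ℓ¹(ℕ)). For every ε > 0 there exist a positive integer r and real numbers ν_1, …, ν_r such that Σ_{k=0}^∞ |φ_k − Σ_{m=1}^r ν_m e^{−(2m+1)k/τ}| ≤ ε. In other words, the linear span of the sequences (e^{−(2m+1)k/τ})_{k∈ℕ}, m = 1, 2, 3, …, is dense in ℓ¹(ℕ). -/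
/-!
Let `V` be the closure in `ℓ¹` of the span of the geometric sequences `(q_m ^ k)_k`, where
`q_m → 0`, `q_m ≠ 0`. By strong induction every unit vector `e_n` lies in `V`: if
`e_0, …, e_{n-1} ∈ V`, then `t⁻ⁿ (geom t - ∑_{j<n} t ^ j e_j) ∈ V` for every ratio `t = q_m`, and
its distance to `e_n` is `|t| / (1 - |t|)`, which tends to `0` along `q_m`. As finitely supported
sequences are dense in `ℓ¹`, `V` is everything. The theorem is the case
`q_m = exp (-(2m + 3) / τ)`.
-/

open Filter Topology Finset Submodule
open scoped lp

theorem lp.norm_eq_tsum_norm {α : Type*} {E : α → Type*} [∀ i, NormedAddCommGroup (E i)]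
    (f : lp E 1) : ‖f‖ = ∑' i, ‖f i‖ := by
  simpa using lp.norm_eq_tsum_rpow (by simp) f

section Geometric

variable {𝕜 : Type*} [NormedField 𝕜]

theorem memℓp_one_geometric {q : 𝕜} (hq : ‖q‖ < 1) : Memℓp (fun k : ℕ => q ^ k) 1 :=
  memℓp_gen (by simpa using summable_geometric_of_lt_one (norm_nonneg q) hq)

noncomputable def geometricℓ1 (q : 𝕜) (hq : ‖q‖ < 1) : ℓ¹(ℕ, 𝕜) :=
  ⟨fun k => q ^ k, memℓp_one_geometric hq⟩

@[simp]
theorem geometricℓ1_apply {q : 𝕜} (hq : ‖q‖ < 1) (k : ℕ) : geometricℓ1 q hq k = q ^ k := rfl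

theorem norm_geometricℓ1 {q : 𝕜} (hq : ‖q‖ < 1) : ‖geometricℓ1 q hq‖ = (1 - ‖q‖)⁻¹ := by
  simp only [lp.norm_eq_tsum_norm, geometricℓ1_apply, norm_pow]
  exact tsum_geometric_of_lt_one (norm_nonneg q) hq

theorem norm_geometricℓ1_sub_sum_single {q : 𝕜} (hq : ‖q‖ < 1) (n : ℕ) :
    ‖geometricℓ1 q hq - ∑ j ∈ range n, lp.single 1 j (q ^ j)‖ = ‖q‖ ^ n / (1 - ‖q‖) := by
  have h := lp.norm_compl_sum_single (p := 1) (by simp) (geometricℓ1 q hq) (range n)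
  simp only [ENNReal.toReal_one, Real.rpow_one, geometricℓ1_apply, norm_pow] at h
  rw [h, norm_geometricℓ1, geom_sum_eq hq.ne]
  have h₁ : 1 - ‖q‖ ≠ 0 := by linarith
  have h₂ : ‖q‖ - 1 ≠ 0 := by linarith
  field_simp
  ring

theorem norm_smul_geometricℓ1_sub_sum_single_sub_single {t : 𝕜} (ht : ‖t‖ < 1) (ht0 : t ≠ 0)
    (n : ℕ) :
    ‖(t ^ n)⁻¹ • (geometricℓ1 t ht - ∑ j ∈ range n, lp.single 1 j (t ^ j)) - lp.single 1 n 1‖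
      = ‖t‖ / (1 - ‖t‖) := by
  have hsingle : (lp.single 1 n 1 : ℓ¹(ℕ, 𝕜)) = (t ^ n)⁻¹ • lp.single 1 n (t ^ n) := by
    rw [← lp.single_smul, smul_eq_mul, inv_mul_cancel₀ (pow_ne_zero n ht0)]
  rw [hsingle, ← smul_sub, sub_sub, ← sum_range_succ, norm_smul,
    norm_geometricℓ1_sub_sum_single, norm_inv, norm_pow, pow_succ]
  have : ‖t‖ ^ n ≠ 0 := pow_ne_zero n (norm_ne_zero_iff.mpr ht0)
  field_simp

end Geometric

section Density

variable {𝕜 ι : Type*} [NormedField 𝕜] {l : Filter ι} [l.NeBot]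

theorem lp_single_mem_topologicalClosure_span_geometricℓ1 {q : ι → 𝕜} (hq : ∀ m, ‖q m‖ < 1)
    (hq0 : Tendsto q l (𝓝[≠] 0)) (n : ℕ) :
    lp.single 1 n 1 ∈
      (span 𝕜 (Set.range fun m => geometricℓ1 (q m) (hq m))).topologicalClosure := by
  set S := span 𝕜 (Set.range fun m => geometricℓ1 (q m) (hq m))
  set V := S.topologicalClosure
  induction n using Nat.strong_induction_on with
  | _ n ih =>
  set x : ι → ℓ¹(ℕ, 𝕜) := fun m =>
    (q m ^ n)⁻¹ • (geometricℓ1 (q m) (hq m) - ∑ j ∈ range n, lp.single 1 j (q m ^ j))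
  have hxV (m : ι) : x m ∈ V := by
    refine V.smul_mem _ (V.sub_mem (le_topologicalClosure _ (subset_span ⟨m, rfl⟩))
      (V.sum_mem fun j hj => ?_))
    rw [← mul_one (q m ^ j), ← smul_eq_mul, lp.single_smul]
    exact V.smul_mem _ (ih j (mem_range.mp hj))
  have hx : Tendsto x l (𝓝 (lp.single 1 n 1)) := by
    rw [tendsto_iff_norm_sub_tendsto_zero]
    have hnorm : Tendsto (fun m => ‖q m‖) l (𝓝 0) := by
      simpa using (tendsto_nhdsWithin_iff.mp hq0).1.norm
    have hlim : Tendsto (fun m => ‖q m‖ / (1 - ‖q m‖)) l (𝓝 0) := by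
      rw [show (0 : ℝ) = 0 / (1 - 0) by simp]
      exact hnorm.div (tendsto_const_nhds.sub hnorm) (by simp)
    refine hlim.congr' ?_
    filter_upwards [(tendsto_nhdsWithin_iff.mp hq0).2] with m hm
    exact (norm_smul_geometricℓ1_sub_sum_single_sub_single (hq m) hm n).symm
  exact S.isClosed_topologicalClosure.mem_of_tendsto hx (Eventually.of_forall hxV)

theorem topologicalClosure_span_geometricℓ1_eq_top {q : ι → 𝕜} (hq : ∀ m, ‖q m‖ < 1)
    (hq0 : Tendsto q l (𝓝[≠] 0)) :
    (span 𝕜 (Set.range fun m => geometricℓ1 (q m) (hq m))).topologicalClosure = ⊤ := by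
  refine eq_top_iff.mpr fun f _ => ?_
  set S := span 𝕜 (Set.range fun m => geometricℓ1 (q m) (hq m))
  set V := S.topologicalClosure
  refine S.isClosed_topologicalClosure.mem_of_tendsto (lp.hasSum_single ENNReal.one_ne_top f)
    (Eventually.of_forall fun s => V.sum_mem fun i _ => ?_)
  rw [← mul_one (f i), ← smul_eq_mul, lp.single_smul]
  exact V.smul_mem _ (lp_single_mem_topologicalClosure_span_geometricℓ1 hq hq0 i)

end Density

theorem Submodule.exists_fin_sum_eq_of_mem_span_range {R M : Type*} [Semiring R] [AddCommMonoid M]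
    [Module R M] {v : ℕ → M} {x : M} (hx : x ∈ span R (Set.range v)) :
    ∃ r, 0 < r ∧ ∃ ν : Fin r → R, x = ∑ m : Fin r, ν m • v m := by
  obtain ⟨c, rfl⟩ := Finsupp.mem_span_range_iff_exists_finsupp.mp hx
  refine ⟨(c.support.sup id).succ, Nat.succ_pos _, fun m => c m, ?_⟩
  rw [Fin.sum_univ_eq_sum_range (fun m => c m • v m)]
  exact Finsupp.sum_of_support_subset c (subset_range_sup_succ _) _ (fun _ _ => zero_smul R _)

theorem tendsto_exp_neg_odd_div_nhdsNE {τ : ℝ} (hτ : 0 < τ) :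
    Tendsto (fun m : ℕ => Real.exp (-(2 * ((m : ℝ) + 1) + 1) / τ)) atTop (𝓝[≠] 0) := by
  refine tendsto_nhdsWithin_mono_right (fun _ hx => ne_of_gt hx)
    (Real.tendsto_exp_atBot_nhdsGT.comp ?_)
  refine Tendsto.atBot_div_const hτ (tendsto_neg_atTop_atBot.comp ?_)
  refine tendsto_atTop_add_const_right _ 1 ?_
  exact (tendsto_natCast_atTop_atTop.atTop_add tendsto_const_nhds).const_mul_atTop two_pos

/-- ℓ¹-density of odd exponential polynomials: for any absolutely summable real sequence `φ`,
any `τ > 0` and any `ε > 0`, there are `r ≥ 1` and coefficients `ν_1, …, ν_r` with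
`Σ_k |φ_k − Σ_{m=1}^r ν_m e^{−(2m+1)k/τ}| ≤ ε`. -/
theorem stmt6 (τ : ℝ) (hτ : 0 < τ) (φ : ℕ → ℝ) (hφ : Summable (fun k => |φ k|))
    (ε : ℝ) (hε : 0 < ε) :
    ∃ r : ℕ, 0 < r ∧ ∃ ν : Fin r → ℝ,
      ∑' k : ℕ,
        |φ k - ∑ m : Fin r, ν m * Real.exp (-((2 * (((m : ℕ) : ℝ) + 1) + 1) * (k : ℝ)) / τ)| ≤ ε := by
  set q : ℕ → ℝ := fun m => Real.exp (-(2 * ((m : ℝ) + 1) + 1) / τ)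
  have hq (m : ℕ) : ‖q m‖ < 1 := by
    rw [Real.norm_of_nonneg (Real.exp_pos _).le, Real.exp_lt_one_iff]
    exact div_neg_of_neg_of_pos (by linarith [(Nat.cast_nonneg m : (0 : ℝ) ≤ m)]) hτ
  have hdense := dense_iff_topologicalClosure_eq_top.mpr
    (topologicalClosure_span_geometricℓ1_eq_top hq (tendsto_exp_neg_odd_div_nhdsNE hτ))
  obtain ⟨v, hv, hφv⟩ := hdense.exists_dist_lt (⟨φ, memℓp_gen (by simpa using hφ)⟩ : ℓ¹(ℕ, ℝ)) hε
  obtain ⟨r, hr, ν, rfl⟩ := exists_fin_sum_eq_of_mem_span_range hv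
  rw [dist_eq_norm, lp.norm_eq_tsum_norm] at hφv
  refine ⟨r, hr, ν, (le_of_eq (tsum_congr fun k => ?_)).trans hφv.le⟩
  simp only [lp.coeFn_sub, lp.coeFn_sum, lp.coeFn_smul, Pi.sub_apply, Finset.sum_apply,
    Pi.smul_apply, smul_eq_mul, geometricℓ1_apply, Real.norm_eq_abs, q, ← Real.exp_nat_mul]
  congr 2
  refine Finset.sum_congr rfl fun m _ => ?_
  congr 2
  ring
end
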